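/- Assume F_S is convex on ℝ^p. Then for every x, x̄ ∈ X, every family y_1, …, y_m ∈ ℝ^d, and every η > 0, γ > 0: (1/(n·m)) ∑_{i=1}^n ∑_{j=1}^m ‖ Π_X( x − η·Dg_j(x)^T ∇f_i(y_j) ) − x̄ ‖² ≤ (1 + C_f·L_g²·η/γ)·‖x − x̄‖² + L_f²·L_g²·η² − 2η·( F_S(x) − F_S(x̄) ) + γ·C_f·η·(1/m) ∑_{j=1}^m ‖ g_S(x) − y_j ‖². -/

import Mathlib

/-!
Projection onto the convex set `X` does not increase the distance to `x̄ ∈ X`, so each term is at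
most `‖x - x̄ - η vᵢⱼ‖²` with `vᵢⱼ = Dg_j(x)ᵀ ∇f_i(y_j)`, and `‖vᵢⱼ‖ ≤ L_g L_f`. In the cross term,
`vᵢⱼ` is replaced by the exact direction `uᵢⱼ = Dg_j(x)ᵀ ∇f_i(g_S(x))` at a cost of at most
`L_g C_f ‖g_S(x) - y_j‖ ‖x - x̄‖`, which AM–GM with weight `γ` splits into the two `γ`-terms.
The average of the `uᵢⱼ` is `∇F_S(x)`, and convexity gives `⟪∇F_S(x), x - x̄⟫ ≥ F_S(x) - F_S(x̄)`.
-/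

open scoped RealInnerProductSpace

section NormedSpace

variable {E F : Type*} [NormedAddCommGroup E] [NormedSpace ℝ E]
  [NormedAddCommGroup F] [NormedSpace ℝ F]

theorem ConvexOn.add_le_of_hasFDerivAt {f : E → ℝ} (hf : ConvexOn ℝ Set.univ f) {x y : E}
    {f' : E →L[ℝ] ℝ} (hf' : HasFDerivAt f f' x) : f x + f' (y - x) ≤ f y := by
  have hline : ConvexOn ℝ Set.univ (f ∘ AffineMap.lineMap x y) := hf.comp_affineMap _
  have hderiv : HasDerivAt (f ∘ AffineMap.lineMap x y) (f' (y - x)) (0 : ℝ) :=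
    (by simpa using hf' : HasFDerivAt f f' (AffineMap.lineMap x y (0 : ℝ))).comp_hasDerivAt _
      AffineMap.hasDerivAt_lineMap
  have := hline.le_slope_of_hasDerivAt (Set.mem_univ 0) (Set.mem_univ 1) zero_lt_one hderiv
  simp only [slope, Function.comp_apply, AffineMap.lineMap_apply_one, AffineMap.lineMap_apply_zero,
    sub_zero, inv_one, vsub_eq_sub, one_smul] at this
  linarith

theorem norm_fderiv_le_of_norm_sub_le {f : E → F} {L : ℝ} (hL : 0 ≤ L)
    (hf : ∀ x y, ‖f x - f y‖ ≤ L * ‖x - y‖) (x : E) : ‖fderiv ℝ f x‖ ≤ L :=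
  norm_fderiv_le_of_lipschitz ℝ (f := f) (C := ⟨L, hL⟩)
    (LipschitzWith.of_dist_le_mul fun x y => by rw [dist_eq_norm, dist_eq_norm]; exact hf x y)

theorem hasFDerivAt_mean_comp_mean {n m : ℕ} {f : Fin n → F → ℝ} {g : Fin m → E → F} {x : E}
    (hg : ∀ j, DifferentiableAt ℝ (g j) x)
    (hf : ∀ i, DifferentiableAt ℝ (f i) ((m : ℝ)⁻¹ • ∑ j, g j x)) :
    HasFDerivAt (fun z => (n : ℝ)⁻¹ * ∑ i, f i ((m : ℝ)⁻¹ • ∑ j, g j z))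
      ((n : ℝ)⁻¹ • ∑ i, (fderiv ℝ (f i) ((m : ℝ)⁻¹ • ∑ j, g j x)).comp
        ((m : ℝ)⁻¹ • ∑ j, fderiv ℝ (g j) x)) x := by
  have hmean : HasFDerivAt (fun z => (m : ℝ)⁻¹ • ∑ j, g j z)
      ((m : ℝ)⁻¹ • ∑ j, fderiv ℝ (g j) x) x :=
    (HasFDerivAt.fun_sum fun j _ => (hg j).hasFDerivAt).fun_const_smul _
  exact (HasFDerivAt.fun_sum fun i _ => (hf i).hasFDerivAt.comp x hmean).const_mul _

theorem smul_sum_comp_smul_sum_apply {n m : ℕ} (Φ : Fin n → F →L[ℝ] ℝ) (Ψ : Fin m → E →L[ℝ] F)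
    (e : E) :
    ((n : ℝ)⁻¹ • ∑ i, (Φ i).comp ((m : ℝ)⁻¹ • ∑ j, Ψ j)) e =
      ((n : ℝ) * m)⁻¹ * ∑ i, ∑ j, Φ i (Ψ j e) := by
  simp only [smul_apply, FunLike.coe_sum, Finset.sum_apply, ContinuousLinearMap.comp_apply,
    map_smul, map_sum, smul_eq_mul, Finset.mul_sum, mul_inv, mul_assoc]

end NormedSpace

theorem inv_mul_sum_sum_le_of_le {n m : ℕ} (hn : n ≠ 0) (hm : m ≠ 0) {a c : Fin n → Fin m → ℝ}
    {b : Fin m → ℝ} {K β δ : ℝ} (h : ∀ i j, a i j ≤ K + β * b j - δ * c i j) :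
    ((n : ℝ) * m)⁻¹ * ∑ i, ∑ j, a i j ≤
      K + β * ((m : ℝ)⁻¹ * ∑ j, b j) - δ * (((n : ℝ) * m)⁻¹ * ∑ i, ∑ j, c i j) := by
  have hsum := Finset.sum_le_sum fun i (_ : i ∈ Finset.univ) =>
    Finset.sum_le_sum fun j (_ : j ∈ Finset.univ) => h i j
  simp only [Finset.sum_sub_distrib, Finset.sum_add_distrib, Finset.sum_const, Finset.card_univ,
    Fintype.card_fin, nsmul_eq_mul, ← Finset.mul_sum] at hsum
  have hnm : (0 : ℝ) < n * m := by positivity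
  calc ((n : ℝ) * m)⁻¹ * ∑ i, ∑ j, a i j
      ≤ ((n : ℝ) * m)⁻¹ * (n * (m * K) + n * (β * ∑ j, b j) - δ * ∑ i, ∑ j, c i j) :=
        mul_le_mul_of_nonneg_left hsum (inv_nonneg.2 hnm.le)
    _ = _ := by field_simp

section InnerProductSpace

variable {E F : Type*} [NormedAddCommGroup E] [InnerProductSpace ℝ E]
  [NormedAddCommGroup F] [InnerProductSpace ℝ F]

theorem norm_sub_le_of_forall_dist_le {K : Set E} (hK : Convex ℝ K) {z v w : E}
    (hv : v ∈ K) (hw : w ∈ K) (hmin : ∀ u ∈ K, dist v z ≤ dist u z) :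
    ‖v - w‖ ≤ ‖z - w‖ := by
  have hinf : ‖z - v‖ = ⨅ u : K, ‖z - u‖ := by
    have : Nonempty K := ⟨⟨v, hv⟩⟩
    refine le_antisymm (le_ciInf fun u => ?_) (ciInf_le ⟨0, ?_⟩ (⟨v, hv⟩ : K))
    · simpa only [dist_eq_norm, norm_sub_rev] using hmin u u.2
    · rintro _ ⟨u, rfl⟩
      exact norm_nonneg _
  have hobtuse : ⟪z - v, w - v⟫ ≤ 0 := (norm_eq_iInf_iff_real_inner_le_zero hK hv).1 hinf w hw
  have hsplit : ‖z - w‖ ^ 2 = ‖z - v‖ ^ 2 - 2 * ⟪z - v, w - v⟫ + ‖v - w‖ ^ 2 := by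
    rw [← norm_sub_rev w v, ← norm_sub_sq_real, sub_sub_sub_cancel_right]
  refine (pow_le_pow_iff_left₀ (norm_nonneg _) (norm_nonneg _) two_ne_zero).1 ?_
  nlinarith [sq_nonneg ‖z - v‖]

theorem norm_gradient_eq_norm_fderiv [CompleteSpace F] (f : F → ℝ) (y : F) :
    ‖gradient f y‖ = ‖fderiv ℝ f y‖ := by
  rw [← toDual_gradient, LinearIsometryEquiv.norm_map]

theorem inner_adjoint_gradient [CompleteSpace E] [CompleteSpace F] (A : E →L[ℝ] F) (f : F → ℝ)
    (y : F) (e : E) :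
    ⟪ContinuousLinearMap.adjoint A (gradient f y), e⟫ = fderiv ℝ f y (A e) := by
  rw [ContinuousLinearMap.adjoint_inner_left, ← toDual_gradient,
    InnerProductSpace.toDual_apply_apply]

theorem norm_sub_smul_sq_le {e u v : E} {η γ C L G r : ℝ} (hη : 0 ≤ η) (hγ : 0 < γ)
    (hC : 0 ≤ C) (hv : ‖v‖ ≤ G) (huv : ‖u - v‖ ≤ L * (C * r)) :
    ‖e - η • v‖ ^ 2 ≤ (1 + C * L ^ 2 * η / γ) * ‖e‖ ^ 2 + G ^ 2 * η ^ 2 + γ * C * η * r ^ 2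
      - 2 * η * ⟪u, e⟫ := by
  have hexpand : ‖e - η • v‖ ^ 2 = ‖e‖ ^ 2 - 2 * η * ⟪v, e⟫ + η ^ 2 * ‖v‖ ^ 2 := by
    rw [norm_sub_sq_real, real_inner_smul_right, norm_smul, real_inner_comm, mul_pow,
      Real.norm_eq_abs, sq_abs]
    ring
  have hbias : ⟪u, e⟫ - ⟪v, e⟫ ≤ L * (C * r) * ‖e‖ := by
    rw [← inner_sub_left]
    exact (real_inner_le_norm _ _).trans (mul_le_mul_of_nonneg_right huv (norm_nonneg e))
  have hamgm : 2 * (L * ‖e‖) * r ≤ L ^ 2 * ‖e‖ ^ 2 / γ + γ * r ^ 2 := by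
    rw [div_add' _ _ _ hγ.ne', le_div_iff₀ hγ]
    nlinarith [sq_nonneg (L * ‖e‖ - γ * r)]
  have hv2 : ‖v‖ ^ 2 ≤ G ^ 2 := pow_le_pow_left₀ (norm_nonneg v) hv 2
  have hquad := mul_le_mul_of_nonneg_left hv2 (sq_nonneg η)
  have hcross := mul_le_mul_of_nonneg_left hbias (by positivity : (0 : ℝ) ≤ 2 * η)
  have hsplit := mul_le_mul_of_nonneg_left hamgm (mul_nonneg hC hη)
  have hcoeff : C * η * (L ^ 2 * ‖e‖ ^ 2 / γ) = C * L ^ 2 * η / γ * ‖e‖ ^ 2 := by ring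
  rw [hexpand]
  nlinarith

end InnerProductSpace

theorem stmt_19_general
    (p d n m : ℕ) (hn : 1 ≤ n) (hm : 1 ≤ m)
    (X : Set (EuclideanSpace ℝ (Fin p)))
    (hXconv : Convex ℝ X)
    (proj : EuclideanSpace ℝ (Fin p) → EuclideanSpace ℝ (Fin p))
    (hproj : ∀ z, proj z ∈ X ∧ ∀ w ∈ X, dist (proj z) z ≤ dist w z)
    (f : Fin n → EuclideanSpace ℝ (Fin d) → ℝ)
    (g : Fin m → EuclideanSpace ℝ (Fin p) → EuclideanSpace ℝ (Fin d))
    (Lf Lg Cf : ℝ) (hLf : 0 < Lf) (hLg : 0 < Lg) (hCf : 0 < Cf)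
    (hfdiff : ∀ i, Differentiable ℝ (f i))
    (hgdiff : ∀ j, Differentiable ℝ (g j))
    (hflip : ∀ i y₁ y₂, |f i y₁ - f i y₂| ≤ Lf * ‖y₁ - y₂‖)
    (hgradlip : ∀ i y₁ y₂, ‖gradient (f i) y₁ - gradient (f i) y₂‖ ≤ Cf * ‖y₁ - y₂‖)
    (hglip : ∀ j x₁ x₂, ‖g j x₁ - g j x₂‖ ≤ Lg * ‖x₁ - x₂‖)
    (gS : EuclideanSpace ℝ (Fin p) → EuclideanSpace ℝ (Fin d))
    (hgS : ∀ z, gS z = (m : ℝ)⁻¹ • ∑ j, g j z)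
    (FS : EuclideanSpace ℝ (Fin p) → ℝ)
    (hFS : ∀ z, FS z = (n : ℝ)⁻¹ * ∑ i, f i (gS z))
    (hFSconv : ConvexOn ℝ Set.univ FS) :
    ∀ x ∈ X, ∀ xb ∈ X, ∀ (Y : Fin m → EuclideanSpace ℝ (Fin d)) (η γ : ℝ),
      0 < η → 0 < γ →
      ((n : ℝ) * m)⁻¹ *
          ∑ i, ∑ j,
            ‖proj (x - η • (ContinuousLinearMap.adjoint (fderiv ℝ (g j) x)
                (gradient (f i) (Y j)))) - xb‖ ^ 2 ≤
        (1 + Cf * Lg ^ 2 * η / γ) * ‖x - xb‖ ^ 2 + Lf ^ 2 * Lg ^ 2 * η ^ 2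
          - 2 * η * (FS x - FS xb)
          + γ * Cf * η * ((m : ℝ)⁻¹ * ∑ j, ‖gS x - Y j‖ ^ 2) := by
  intro x _ xb hxb Y η γ hη hγ
  set A : Fin m → _ := fun j => fderiv ℝ (g j) x
  have hA : ∀ j z, ‖(A j).adjoint z‖ ≤ Lg * ‖z‖ := fun j z =>
    ((A j).adjoint.le_opNorm z).trans <| mul_le_mul_of_nonneg_right
      (by rw [LinearIsometryEquiv.norm_map]
          exact norm_fderiv_le_of_norm_sub_le hLg.le (hglip j) x)
      (norm_nonneg z)
  have hgrad : ∀ i y, ‖gradient (f i) y‖ ≤ Lf := fun i y => by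
    rw [norm_gradient_eq_norm_fderiv]
    exact norm_fderiv_le_of_norm_sub_le hLf.le (fun y₁ y₂ => hflip i y₁ y₂) y
  have hstep : ∀ i j, ‖proj (x - η • (A j).adjoint (gradient (f i) (Y j))) - xb‖ ^ 2 ≤
      (1 + Cf * Lg ^ 2 * η / γ) * ‖x - xb‖ ^ 2 + (Lg * Lf) ^ 2 * η ^ 2
        + γ * Cf * η * ‖gS x - Y j‖ ^ 2
        - 2 * η * ⟪(A j).adjoint (gradient (f i) (gS x)), x - xb⟫ := by
    intro i j
    refine (pow_le_pow_left₀ (norm_nonneg _)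
      (norm_sub_le_of_forall_dist_le hXconv (hproj _).1 hxb (hproj _).2) 2).trans ?_
    rw [sub_right_comm]
    refine norm_sub_smul_sq_le hη.le hγ hCf.le ?_ ?_
    · exact (hA j _).trans (mul_le_mul_of_nonneg_left (hgrad i _) hLg.le)
    · rw [← map_sub]
      exact (hA j _).trans (mul_le_mul_of_nonneg_left (hgradlip i _ _) hLg.le)
  have hdescent : FS x - FS xb ≤
      ((n : ℝ) * m)⁻¹ * ∑ i, ∑ j, ⟪(A j).adjoint (gradient (f i) (gS x)), x - xb⟫ := by
    have hFS' : FS = fun z => (n : ℝ)⁻¹ * ∑ i, f i ((m : ℝ)⁻¹ • ∑ j, g j z) :=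
      funext fun z => by rw [hFS, hgS]
    have hderiv := hasFDerivAt_mean_comp_mean (fun j => hgdiff j x) (fun i => hfdiff i _)
    rw [← hFS', ← hgS] at hderiv
    have hsupport := hFSconv.add_le_of_hasFDerivAt hderiv (y := xb)
    rw [smul_sum_comp_smul_sum_apply, ← neg_sub x xb] at hsupport
    simp only [map_neg, Finset.sum_neg_distrib, mul_neg] at hsupport
    simp only [inner_adjoint_gradient]
    linarith
  have hmean := inv_mul_sum_sum_le_of_le (by omega) (by omega) hstep
  rw [mul_pow] at hmean
  linarith [mul_le_mul_of_nonneg_left hdescent (by positivity : (0 : ℝ) ≤ 2 * η)]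

/-- One-step progress inequality for the compositional update (convex case):
if `F_S` is convex on `ℝ^p`, then for every `x, xb ∈ X`, every family
`y_1, …, y_m ∈ ℝ^d` and every `η, γ > 0`,
`(1/(nm)) ∑_i ∑_j ‖Π_X(x − η Dg_j(x)ᵀ ∇f_i(y_j)) − xb‖²
  ≤ (1 + C_f L_g² η/γ)‖x − xb‖² + L_f² L_g² η² − 2η (F_S(x) − F_S(xb))
    + γ C_f η (1/m) ∑_j ‖g_S(x) − y_j‖²`. -/
theorem stmt_19
    (p d n m : ℕ) (hp : 1 ≤ p) (hd : 1 ≤ d) (hn : 1 ≤ n) (hm : 1 ≤ m)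
    (X : Set (EuclideanSpace ℝ (Fin p)))
    (hXne : X.Nonempty) (hXcl : IsClosed X) (hXconv : Convex ℝ X)
    (proj : EuclideanSpace ℝ (Fin p) → EuclideanSpace ℝ (Fin p))
    (hproj : ∀ z, proj z ∈ X ∧ ∀ w ∈ X, dist (proj z) z ≤ dist w z)
    (f : Fin n → EuclideanSpace ℝ (Fin d) → ℝ)
    (g : Fin m → EuclideanSpace ℝ (Fin p) → EuclideanSpace ℝ (Fin d))
    (Lf Lg Cf : ℝ) (hLf : 0 < Lf) (hLg : 0 < Lg) (hCf : 0 < Cf)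
    (hfdiff : ∀ i, Differentiable ℝ (f i))
    (hgdiff : ∀ j, Differentiable ℝ (g j))
    (hflip : ∀ i y₁ y₂, |f i y₁ - f i y₂| ≤ Lf * ‖y₁ - y₂‖)
    (hgradlip : ∀ i y₁ y₂, ‖gradient (f i) y₁ - gradient (f i) y₂‖ ≤ Cf * ‖y₁ - y₂‖)
    (hglip : ∀ j x₁ x₂, ‖g j x₁ - g j x₂‖ ≤ Lg * ‖x₁ - x₂‖)
    (gS : EuclideanSpace ℝ (Fin p) → EuclideanSpace ℝ (Fin d))
    (hgS : ∀ z, gS z = (m : ℝ)⁻¹ • ∑ j, g j z)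
    (FS : EuclideanSpace ℝ (Fin p) → ℝ)
    (hFS : ∀ z, FS z = (n : ℝ)⁻¹ * ∑ i, f i (gS z))
    (hFSconv : ConvexOn ℝ Set.univ FS) :
    ∀ x ∈ X, ∀ xb ∈ X, ∀ (Y : Fin m → EuclideanSpace ℝ (Fin d)) (η γ : ℝ),
      0 < η → 0 < γ →
      ((n : ℝ) * m)⁻¹ *
          ∑ i, ∑ j,
            ‖proj (x - η • (ContinuousLinearMap.adjoint (fderiv ℝ (g j) x)
                (gradient (f i) (Y j)))) - xb‖ ^ 2 ≤
        (1 + Cf * Lg ^ 2 * η / γ) * ‖x - xb‖ ^ 2 + Lf ^ 2 * Lg ^ 2 * η ^ 2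
          - 2 * η * (FS x - FS xb)
          + γ * Cf * η * ((m : ℝ)⁻¹ * ∑ j, ‖gS x - Y j‖ ^ 2) :=
  stmt_19_general p d n m hn hm X hXconv proj hproj f g Lf Lg Cf hLf hLg hCf hfdiff hgdiff hflip
    hgradlip hglip gS hgS FS hFS hFSconv
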